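/- arXiv:math-ph/0105017 — 2 statements merged into one kernel-verified Lean document; each statement's English description precedes it below -/
import Mathlib

section
/- If f₀ ∈ F_M is a minimizer of H_C over F_M, then equality H_C(f₀) = H_C^r(ρ_{f₀}) holds. -/
open MeasureTheory Real Filter Topology

noncomputable section

abbrev Space : Type := EuclideanSpace ℝ (Fin 3)
abbrev Phase : Type := Space × Space

/-- Spatial density induced by a phase-space density. -/
def rho (f : Phase → ℝ) : Space → ℝ := fun x => ∫ v : Space, f (x, v)

/-- Induced gravitational potential `U_ρ = -ρ ∗ 1/|·|`. -/
def Upot (ρ : Space → ℝ) : Space → ℝ := fun x => - ∫ y : Space, ρ y / ‖x - y‖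

/-- Kinetic energy. -/
def Ekin (f : Phase → ℝ) : ℝ := (1/2) * ∫ p : Phase, ‖p.2‖^2 * f p

/-- Casimir functional. -/
def Cas (Q : ℝ → ℝ) (f : Phase → ℝ) : ℝ := ∫ p : Phase, Q (f p)

/-- Potential energy. -/
def Epot (ρ : Space → ℝ) : ℝ :=
  -(1/2) * ∫ x : Space, ∫ y : Space, ρ x * ρ y / ‖x - y‖

/-- Energy-Casimir functional. -/
def HC (Q : ℝ → ℝ) (f : Phase → ℝ) : ℝ := Cas Q f + Ekin f + Epot (rho f)

/-- The constraint set `F_M`. -/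
def FM (Q : ℝ → ℝ) (M : ℝ) : Set (Phase → ℝ) :=
  {f | (∀ p, 0 ≤ f p) ∧ Integrable f ∧
       Integrable (fun p : Phase => Q (f p) + (1/2) * ‖p.2‖^2 * f p) ∧
       MemLp (rho f) (ENNReal.ofReal (6/5)) ∧
       (∫ p : Phase, f p) = M}

/-- `∫ ((1/2)|v|² g(v) + Q(g(v))) dv`. -/
def kinQint (Q : ℝ → ℝ) (g : Space → ℝ) : ℝ :=
  ∫ v : Space, ((1/2) * ‖v‖^2 * g v + Q (g v))

/-- The set `G_r`. -/
def Gset (Q : ℝ → ℝ) (r : ℝ) : Set (Space → ℝ) :=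
  {g | (∀ v, 0 ≤ g v) ∧ Integrable g ∧
       Integrable (fun v => (1/2) * ‖v‖^2 * g v + Q (g v)) ∧
       (∫ v : Space, g v) = r}

/-- The reduced integrand `Φ(r) = inf_{g ∈ G_r} ∫ ((1/2)|v|² g + Q(g))`. -/
def Phi (Q : ℝ → ℝ) (r : ℝ) : ℝ := sInf (kinQint Q '' Gset Q r)

/-- The reduced energy-Casimir functional. -/
def HCr (Q : ℝ → ℝ) (ρ : Space → ℝ) : ℝ := (∫ x : Space, Phi Q (ρ x)) + Epot ρ

/-- Assumptions on `Q`: `Q ∈ C¹([0,∞))` with derivative `Q'`, strictly convex,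
`Q(0) = Q'(0) = 0`, and `Q(f)/f → ∞` as `f → ∞`. -/
structure QHyp (Q Q' : ℝ → ℝ) : Prop where
  hasDeriv : ∀ r ∈ Set.Ici (0:ℝ), HasDerivWithinAt Q (Q' r) (Set.Ici 0) r
  contDeriv : ContinuousOn Q' (Set.Ici 0)
  strictConvex : StrictConvexOn ℝ (Set.Ici 0) Q
  zero : Q 0 = 0
  derivZero : Q' 0 = 0
  superlinear : Tendsto (fun f => Q f / f) atTop atTop

/-!
Fibrewise, `f₀ (x, ·)` is admissible in the variational problem defining `Φ (ρ_{f₀} x)`, which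
gives `H_C^r(ρ_{f₀}) ≤ H_C(f₀)`. Conversely, `Φ r` is attained by the profile
`g(v) = (Q')⁻¹((E - |v|²/2)₊)`, with the cut-off energy `E` fixed by `∫ g = r`: the tangent
inequality of the convex `Q` at `g(v)`, with `E` as Lagrange multiplier, shows that `g` is
minimal. Gluing these minimizers over a measurable version of `ρ_{f₀}` produces a competitor in
`F_M` with the same density and energy `H_C^r(ρ_{f₀})`, and minimality of `f₀` gives the
reverse inequality.
-/

namespace QHyp

variable {Q Q' : ℝ → ℝ}

theorem continuousOn (hQ : QHyp Q Q') : ContinuousOn Q (Set.Ici 0) :=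
  fun r hr => (hQ.hasDeriv r hr).continuousWithinAt

theorem add_deriv_mul_sub_le (hQ : QHyp Q Q') {a b : ℝ} (ha : 0 ≤ a) (hb : 0 ≤ b) :
    Q b + Q' b * (a - b) ≤ Q a := by
  rcases lt_trichotomy a b with h | rfl | h
  · have hs := hQ.strictConvex.convexOn.slope_le_of_hasDerivWithinAt ha hb h (hQ.hasDeriv b hb)
    rw [slope_def_field, div_le_iff₀ (sub_pos.2 h)] at hs
    linarith
  · simp
  · have hs := hQ.strictConvex.convexOn.le_slope_of_hasDerivWithinAt hb ha h (hQ.hasDeriv b hb)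
    rw [slope_def_field, le_div_iff₀ (sub_pos.2 h)] at hs
    linarith

theorem nonneg (hQ : QHyp Q Q') {t : ℝ} (ht : 0 ≤ t) : 0 ≤ Q t := by
  simpa [hQ.zero, hQ.derivZero] using hQ.add_deriv_mul_sub_le ht le_rfl

theorem strictMonoOn_deriv (hQ : QHyp Q Q') : StrictMonoOn Q' (Set.Ici 0) := fun _ hx _ hy hxy =>
  (hQ.strictConvex.lt_slope_of_hasDerivWithinAt hx hy hxy (hQ.hasDeriv _ hx)).trans
    (hQ.strictConvex.slope_lt_of_hasDerivWithinAt hx hy hxy (hQ.hasDeriv _ hy))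

theorem tendsto_deriv_atTop (hQ : QHyp Q Q') : Tendsto Q' atTop atTop := by
  refine tendsto_atTop_mono' atTop ?_ hQ.superlinear
  filter_upwards [eventually_gt_atTop 0] with s hs
  -- the tangent line at `s` passes below `Q 0 = 0`
  have := hQ.add_deriv_mul_sub_le le_rfl hs.le
  rw [hQ.zero] at this
  rw [div_le_iff₀ hs]
  linarith

/-- As `Q' 0 = 0`, continuing `Q'` by the identity on `(-∞, 0]` gives an order automorphism
of `ℝ`. -/
def derivExt (Q' : ℝ → ℝ) (t : ℝ) : ℝ := Q' (max t 0) + min t 0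

theorem derivExt_of_nonneg {t : ℝ} (ht : 0 ≤ t) : derivExt Q' t = Q' t := by
  simp [derivExt, ht]

theorem derivExt_of_nonpos (hQ : QHyp Q Q') {t : ℝ} (ht : t ≤ 0) : derivExt Q' t = t := by
  simp [derivExt, ht, hQ.derivZero]

theorem strictMono_derivExt (hQ : QHyp Q Q') : StrictMono (derivExt Q') :=
  StrictMonoOn.Iic_union_Ici (a := 0)
    (strictMonoOn_id.congr fun _ ht => (hQ.derivExt_of_nonpos ht).symm)
    (hQ.strictMonoOn_deriv.congr fun _ ht => (derivExt_of_nonneg ht).symm)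

theorem continuous_derivExt (hQ : QHyp Q Q') : Continuous (derivExt Q') :=
  (hQ.contDeriv.comp_continuous (continuous_id.max continuous_const)
    fun t => le_max_right t 0).add (continuous_id.min continuous_const)

theorem surjective_derivExt (hQ : QHyp Q Q') : Function.Surjective (derivExt Q') :=
  hQ.continuous_derivExt.surjective
    (hQ.tendsto_deriv_atTop.congr' <| (eventually_ge_atTop 0).mono
      fun _ ht => (derivExt_of_nonneg ht).symm)
    (tendsto_id.congr' <| (eventually_le_atBot 0).mono fun _ ht => (hQ.derivExt_of_nonpos ht).symm)

def derivInv (hQ : QHyp Q Q') : ℝ ≃o ℝ :=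
  (StrictMono.orderIsoOfSurjective _ hQ.strictMono_derivExt hQ.surjective_derivExt).symm

theorem derivInv_zero (hQ : QHyp Q Q') : hQ.derivInv 0 = 0 := by
  rw [derivInv, OrderIso.symm_apply_eq, StrictMono.coe_orderIsoOfSurjective,
    hQ.derivExt_of_nonpos le_rfl]

theorem derivInv_nonneg (hQ : QHyp Q Q') {s : ℝ} (hs : 0 ≤ s) : 0 ≤ hQ.derivInv s :=
  hQ.derivInv_zero ▸ hQ.derivInv.monotone hs

theorem deriv_derivInv (hQ : QHyp Q Q') {s : ℝ} (hs : 0 ≤ s) : Q' (hQ.derivInv s) = s := by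
  rw [← derivExt_of_nonneg (Q' := Q') (hQ.derivInv_nonneg hs), derivInv,
    StrictMono.orderIsoOfSurjective_self_symm_apply (derivExt Q')]

end QHyp

def leastLevel (m : ℝ → ℝ) (r : ℝ) : ℝ := sInf {E | 0 ≤ E ∧ r ≤ m E}

section leastLevel

variable {m : ℝ → ℝ}

theorem leastLevel_set_nonempty (hm : Tendsto m atTop atTop) (r : ℝ) :
    {E | 0 ≤ E ∧ r ≤ m E}.Nonempty :=
  ((eventually_ge_atTop 0).and (hm.eventually_ge_atTop r)).exists

theorem leastLevel_set_bddBelow (r : ℝ) : BddBelow {E | 0 ≤ E ∧ r ≤ m E} :=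
  ⟨0, fun _ hE => hE.1⟩

theorem monotone_leastLevel (hm : Tendsto m atTop atTop) : Monotone (leastLevel m) :=
  fun _ _ h => csInf_le_csInf (leastLevel_set_bddBelow _) (leastLevel_set_nonempty hm _)
    fun _ hE => ⟨hE.1, h.trans hE.2⟩

theorem apply_leastLevel (hm : Continuous m) (hm0 : m 0 = 0) (hmtop : Tendsto m atTop atTop)
    {r : ℝ} (hr : 0 ≤ r) : m (leastLevel m r) = r := by
  have hclosed : IsClosed {E | 0 ≤ E ∧ r ≤ m E} :=
    isClosed_Ici.inter (isClosed_le continuous_const hm)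
  obtain ⟨hE0, hrE⟩ := hclosed.csInf_mem (leastLevel_set_nonempty hmtop r)
    (leastLevel_set_bddBelow r)
  obtain ⟨E, hE, hmE⟩ := intermediate_value_Icc hE0 hm.continuousOn ⟨by rwa [hm0], hrE⟩
  have : leastLevel m r ≤ E := csInf_le (leastLevel_set_bddBelow r) ⟨hE.1, hmE.ge⟩
  rwa [le_antisymm hE.2 this] at hmE

theorem leastLevel_of_nonpos (hm0 : m 0 = 0) {r : ℝ} (hr : r ≤ 0) : leastLevel m r = 0 :=
  le_antisymm (csInf_le (leastLevel_set_bddBelow r) ⟨le_rfl, hr.trans hm0.ge⟩)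
    (le_csInf ⟨0, le_rfl, hr.trans hm0.ge⟩ fun _ hE => hE.1)

end leastLevel

def profile {V : Type*} [NormedAddCommGroup V] (q : ℝ ≃o ℝ) (E : ℝ) (v : V) : ℝ :=
  q (max (E - (1/2) * ‖v‖^2) 0)

def profileMass {V : Type*} [NormedAddCommGroup V] [MeasurableSpace V] (μ : Measure V)
    (q : ℝ ≃o ℝ) (E : ℝ) : ℝ :=
  ∫ v, profile q E v ∂μ

section profile

variable {V : Type*} [NormedAddCommGroup V] {q : ℝ ≃o ℝ}

theorem continuous_profile_uncurry : Continuous fun p : ℝ × V => profile q p.1 p.2 :=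
  q.continuous.comp (by fun_prop)

theorem continuous_profile (E : ℝ) : Continuous (profile (V := V) q E) :=
  continuous_profile_uncurry.comp (Continuous.prodMk_right E)

theorem profile_mono {E E' : ℝ} (h : E ≤ E') (v : V) : profile q E v ≤ profile q E' v :=
  q.monotone (max_le_max (by linarith) le_rfl)

theorem profile_nonneg (hq : q 0 = 0) (E : ℝ) (v : V) : 0 ≤ profile q E v :=
  hq ▸ q.monotone (le_max_right _ _)

theorem profile_of_le (hq : q 0 = 0) {E : ℝ} {v : V} (h : E ≤ (1/2) * ‖v‖^2) :
    profile q E v = 0 := by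
  rw [profile, max_eq_right (by linarith), hq]

theorem hasCompactSupport_profile [ProperSpace V] (hq : q 0 = 0) (E : ℝ) :
    HasCompactSupport (profile (V := V) q E) := by
  refine HasCompactSupport.intro (isCompact_closedBall 0 (√(2 * E))) fun v hv => ?_
  rw [Metric.mem_closedBall, dist_zero_right, not_le] at hv
  have : 2 * E < ‖v‖^2 := (Real.sqrt_lt' ((Real.sqrt_nonneg _).trans_lt hv)).1 hv
  exact profile_of_le hq (by linarith)

variable [MeasurableSpace V] (μ : Measure V)

theorem profileMass_zero (hq : q 0 = 0) : profileMass μ q 0 = 0 := by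
  have : profile (V := V) q 0 = 0 := funext fun v => profile_of_le hq (by positivity)
  simp [profileMass, this]

variable [BorelSpace V] [ProperSpace V] [IsFiniteMeasureOnCompacts μ]

theorem integrable_profile (hq : q 0 = 0) (E : ℝ) : Integrable (profile q E) μ :=
  (continuous_profile E).integrable_of_hasCompactSupport (hasCompactSupport_profile hq E)

theorem continuous_profileMass (hq : q 0 = 0) : Continuous (profileMass μ q) := by
  refine continuous_iff_continuousAt.2 fun E₀ => continuousAt_of_dominated
    (bound := profile q (E₀ + 1)) (Eventually.of_forall fun E =>
      (continuous_profile E).aestronglyMeasurable) ?_ (integrable_profile μ hq _)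
    (Eventually.of_forall fun v => (continuous_profile_uncurry.comp
      (Continuous.prodMk_left v)).continuousAt)
  filter_upwards [Iio_mem_nhds (lt_add_one E₀)] with E hE
  exact Eventually.of_forall fun v => by
    rw [Real.norm_of_nonneg (profile_nonneg hq E v)]
    exact profile_mono (le_of_lt hE) v

theorem tendsto_profileMass_atTop [μ.IsOpenPosMeasure] (hq : q 0 = 0) :
    Tendsto (profileMass μ q) atTop atTop := by
  set B := Metric.closedBall (0 : V) 1
  have hB : 0 < μ.real B :=
    ENNReal.toReal_pos (Metric.measure_closedBall_pos μ 0 one_pos).ne' measure_closedBall_lt_top.ne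
  -- on the unit ball the profile at level `E ≥ 1` is at least `q (E / 2)`
  have hlow : ∀ E, 1 ≤ E → q (E / 2) * μ.real B ≤ profileMass μ q E := fun E hE => by
    rw [mul_comm, ← smul_eq_mul, ← integral_indicator_const _ measurableSet_closedBall]
    refine integral_mono ((integrableOn_const measure_closedBall_lt_top.ne).integrable_indicator
      measurableSet_closedBall) (integrable_profile μ hq E) fun v => ?_
    by_cases hv : v ∈ B
    · rw [Set.indicator_of_mem hv]
      have : ‖v‖ ^ 2 ≤ 1 := pow_le_one₀ (norm_nonneg v) (by simpa [B] using hv)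
      exact q.monotone (le_max_of_le_left (by linarith))
    · rw [Set.indicator_of_notMem hv]
      exact profile_nonneg hq E v
  exact tendsto_atTop_mono' atTop ((eventually_ge_atTop 1).mono hlow)
    ((q.tendsto_atTop.comp (tendsto_id.atTop_div_const two_pos)).atTop_mul_const hB)

end profile

namespace QHyp

variable {Q Q' : ℝ → ℝ} (hQ : QHyp Q Q')

def level (r : ℝ) : ℝ := leastLevel (profileMass (volume : Measure Space) hQ.derivInv) r

def optimalProfile (r : ℝ) : Space → ℝ := profile hQ.derivInv (hQ.level r)

theorem monotone_level : Monotone hQ.level :=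
  monotone_leastLevel (tendsto_profileMass_atTop volume hQ.derivInv_zero)

theorem profileMass_level {r : ℝ} (hr : 0 ≤ r) :
    profileMass (volume : Measure Space) hQ.derivInv (hQ.level r) = r :=
  apply_leastLevel (continuous_profileMass volume hQ.derivInv_zero)
    (profileMass_zero volume hQ.derivInv_zero)
    (tendsto_profileMass_atTop volume hQ.derivInv_zero) hr

theorem optimalProfile_of_nonpos {r : ℝ} (hr : r ≤ 0) : hQ.optimalProfile r = 0 := by
  rw [optimalProfile, level, leastLevel_of_nonpos (profileMass_zero volume hQ.derivInv_zero) hr]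
  exact funext fun v => profile_of_le hQ.derivInv_zero (by positivity)

theorem continuous_Q_profile :
    Continuous fun p : ℝ × Space => Q (profile hQ.derivInv p.1 p.2) :=
  hQ.continuousOn.comp_continuous continuous_profile_uncurry
    fun p => profile_nonneg hQ.derivInv_zero p.1 p.2

theorem continuous_kinetic_profile :
    Continuous fun p : ℝ × Space => (1/2) * ‖p.2‖^2 * profile hQ.derivInv p.1 p.2
      + Q (profile hQ.derivInv p.1 p.2) :=
  ((by fun_prop : Continuous fun p : ℝ × Space => (1/2) * ‖p.2‖^2).mul
    continuous_profile_uncurry).add hQ.continuous_Q_profile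

theorem integrable_kinetic_profile (E : ℝ) :
    Integrable fun v : Space => (1/2) * ‖v‖^2 * profile hQ.derivInv E v
      + Q (profile hQ.derivInv E v) := by
  refine (hQ.continuous_kinetic_profile.comp
    (Continuous.prodMk_right E)).integrable_of_hasCompactSupport ?_
  have hc := hasCompactSupport_profile (V := Space) hQ.derivInv_zero E
  exact (hc.mul_left.add (hc.comp_left hQ.zero) :)

theorem optimalProfile_mem_Gset {r : ℝ} (hr : 0 ≤ r) : hQ.optimalProfile r ∈ Gset Q r :=
  ⟨profile_nonneg hQ.derivInv_zero _, integrable_profile volume hQ.derivInv_zero _,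
    hQ.integrable_kinetic_profile _, hQ.profileMass_level hr⟩

theorem tangent_derivInv_le {a : ℝ} (ha : 0 ≤ a) (c : ℝ) :
    Q (hQ.derivInv (max c 0)) + c * (a - hQ.derivInv (max c 0)) ≤ Q a := by
  rcases le_total 0 c with hc | hc
  · have := hQ.add_deriv_mul_sub_le ha (hQ.derivInv_nonneg hc)
    rw [hQ.deriv_derivInv hc] at this
    rwa [max_eq_left hc]
  · rw [max_eq_right hc, hQ.derivInv_zero, hQ.zero, sub_zero, zero_add]
    exact (mul_nonpos_of_nonpos_of_nonneg hc ha).trans (hQ.nonneg ha)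

end QHyp

section Phi

variable {Q Q' : ℝ → ℝ}

theorem kinQint_nonneg (hQ : QHyp Q Q') {g : Space → ℝ} (hg : ∀ v, 0 ≤ g v) :
    0 ≤ kinQint Q g :=
  integral_nonneg fun v => add_nonneg (mul_nonneg (by positivity) (hg v)) (hQ.nonneg (hg v))

theorem Phi_nonneg (hQ : QHyp Q Q') (r : ℝ) : 0 ≤ Phi Q r :=
  Real.sInf_nonneg <| by
    rintro _ ⟨g, hg, rfl⟩
    exact kinQint_nonneg hQ hg.1

theorem Phi_le_kinQint (hQ : QHyp Q Q') {r : ℝ} {g : Space → ℝ} (hg : g ∈ Gset Q r) :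
    Phi Q r ≤ kinQint Q g :=
  csInf_le ⟨0, by rintro _ ⟨g, hg, rfl⟩; exact kinQint_nonneg hQ hg.1⟩ ⟨g, hg, rfl⟩

namespace QHyp

variable (hQ : QHyp Q Q')

theorem kinQint_profile_le (E : ℝ) {g : Space → ℝ}
    (hg : g ∈ Gset Q (profileMass (volume : Measure Space) hQ.derivInv E)) :
    kinQint Q (profile hQ.derivInv E) ≤ kinQint Q g := by
  obtain ⟨hg0, hgi, hgk, hgm⟩ := hg
  set G := profile (V := Space) hQ.derivInv E
  have hGi : Integrable G := integrable_profile volume hQ.derivInv_zero E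
  -- `E` is the Lagrange multiplier of the mass constraint
  have key : ∀ v, (1/2) * ‖v‖^2 * G v + Q (G v) + E * (g v - G v)
      ≤ (1/2) * ‖v‖^2 * g v + Q (g v) := fun v => by
    have := hQ.tangent_derivInv_le (hg0 v) (E - (1/2) * ‖v‖^2)
    calc _ = Q (G v) + (E - (1/2) * ‖v‖^2) * (g v - G v) + (1/2) * ‖v‖^2 * g v := by ring
      _ ≤ _ := by simp only [G, profile]; linarith
  have hmul : Integrable fun v => E * (g v - G v) := (hgi.sub hGi).const_mul E
  calc kinQint Q G = ∫ v, ((1/2) * ‖v‖^2 * G v + Q (G v) + E * (g v - G v)) := by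
        rw [integral_add (hQ.integrable_kinetic_profile E) hmul, integral_const_mul,
          integral_sub hgi hGi, hgm, profileMass, sub_self, mul_zero, add_zero, kinQint]
    _ ≤ kinQint Q g := integral_mono ((hQ.integrable_kinetic_profile E).add hmul) hgk key

theorem Phi_eq_kinQint_optimalProfile (r : ℝ) : Phi Q r = kinQint Q (hQ.optimalProfile r) := by
  rcases lt_or_ge r 0 with hr | hr
  · have : Gset Q r = ∅ := Set.eq_empty_of_forall_notMem fun g hg =>
      hr.not_ge (hg.2.2.2 ▸ integral_nonneg hg.1)
    rw [Phi, this, Set.image_empty, Real.sInf_empty, hQ.optimalProfile_of_nonpos hr.le]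
    simp [kinQint, hQ.zero]
  · refine IsLeast.csInf_eq ⟨⟨_, hQ.optimalProfile_mem_Gset hr, rfl⟩, ?_⟩
    rintro _ ⟨g, hg, rfl⟩
    exact hQ.kinQint_profile_le _ (by rwa [hQ.profileMass_level hr])

end QHyp

theorem measurable_Phi (hQ : QHyp Q Q') : Measurable (Phi Q) := by
  have hF := hQ.continuous_kinetic_profile.measurable.comp
    ((hQ.monotone_level.measurable.comp measurable_fst).prodMk measurable_snd)
  rw [show Phi Q = _ from funext hQ.Phi_eq_kinQint_optimalProfile]
  exact (hF.stronglyMeasurable.integral_prod_right' (ν := volume)).measurable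

end Phi

section PhaseSpace

variable {Q Q' : ℝ → ℝ} {f : Phase → ℝ}

theorem rho_nonneg (hf0 : ∀ p, 0 ≤ f p) (x : Space) : 0 ≤ rho f x :=
  integral_nonneg fun v => hf0 (x, v)

theorem integral_rho (hf : Integrable f) : ∫ x, rho f x = ∫ p, f p :=
  (integral_prod f hf).symm

theorem integrable_kinQint_fiber
    (hkin : Integrable fun p : Phase => Q (f p) + (1/2) * ‖p.2‖^2 * f p) :
    Integrable fun x => kinQint Q (fun v => f (x, v)) :=
  hkin.integral_prod_left.congr <| ae_of_all _ fun _ =>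
    integral_congr_ae <| ae_of_all _ fun _ => add_comm _ _

theorem Cas_add_Ekin (hQ : QHyp Q Q') (hf0 : ∀ p, 0 ≤ f p) (hf : AEStronglyMeasurable f)
    (hkin : Integrable fun p : Phase => Q (f p) + (1/2) * ‖p.2‖^2 * f p) :
    Cas Q f + Ekin f = ∫ x, kinQint Q (fun v => f (x, v)) := by
  have hK : Integrable fun p : Phase => (1/2) * ‖p.2‖^2 * f p :=
    hkin.mono' ((by fun_prop : Continuous fun p : Phase => (1/2) * ‖p.2‖^2).aestronglyMeasurable.mul
      hf) <| ae_of_all _ fun p => by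
        rw [Real.norm_of_nonneg (mul_nonneg (by positivity) (hf0 p))]
        linarith [hQ.nonneg (hf0 p)]
  have hC : Integrable fun p => Q (f p) :=
    (hkin.sub hK).congr <| ae_of_all _ fun p => add_sub_cancel_right _ _
  calc Cas Q f + Ekin f = ∫ p, (Q (f p) + (1/2) * ‖p.2‖^2 * f p) := by
        rw [integral_add hC hK, Cas, Ekin, ← integral_const_mul]
        simp only [mul_assoc]
    _ = ∫ x, ∫ v, (Q (f (x, v)) + (1/2) * ‖v‖^2 * f (x, v)) := integral_prod _ hkin
    _ = ∫ x, kinQint Q (fun v => f (x, v)) :=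
        integral_congr_ae <| ae_of_all _ fun _ =>
          integral_congr_ae <| ae_of_all _ fun _ => add_comm _ _

theorem ae_Phi_rho_le_kinQint (hQ : QHyp Q Q') (hf0 : ∀ p, 0 ≤ f p) (hf : Integrable f)
    (hkin : Integrable fun p : Phase => Q (f p) + (1/2) * ‖p.2‖^2 * f p) :
    ∀ᵐ x, Phi Q (rho f x) ≤ kinQint Q (fun v => f (x, v)) := by
  filter_upwards [hf.prod_right_ae, hkin.prod_right_ae] with x hfx hkx
  exact Phi_le_kinQint hQ ⟨fun v => hf0 (x, v), hfx,
    hkx.congr (ae_of_all _ fun _ => add_comm _ _), rfl⟩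

theorem integrable_Phi_rho (hQ : QHyp Q Q') (hf0 : ∀ p, 0 ≤ f p) (hf : Integrable f)
    (hkin : Integrable fun p : Phase => Q (f p) + (1/2) * ‖p.2‖^2 * f p) :
    Integrable fun x => Phi Q (rho f x) :=
  (integrable_kinQint_fiber hkin).mono'
    ((measurable_Phi hQ).comp_aemeasurable hf.integral_prod_left.aemeasurable).aestronglyMeasurable
    ((ae_Phi_rho_le_kinQint hQ hf0 hf hkin).mono fun x hx => by
      rwa [Real.norm_of_nonneg (Phi_nonneg hQ _)])

theorem HCr_rho_le_HC (hQ : QHyp Q Q') (hf0 : ∀ p, 0 ≤ f p) (hf : Integrable f)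
    (hkin : Integrable fun p : Phase => Q (f p) + (1/2) * ‖p.2‖^2 * f p) :
    HCr Q (rho f) ≤ HC Q f := by
  rw [HCr, HC, Cas_add_Ekin hQ hf0 hf.aestronglyMeasurable hkin]
  exact add_le_add_left (integral_mono_ae (integrable_Phi_rho hQ hf0 hf hkin)
    (integrable_kinQint_fiber hkin)
    (ae_Phi_rho_le_kinQint hQ hf0 hf hkin)) _

theorem Epot_congr_ae {ρ ρ' : Space → ℝ} (h : ρ =ᵐ[volume] ρ') : Epot ρ = Epot ρ' := by
  rw [Epot, Epot, integral_congr_ae]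
  filter_upwards [h] with x hx
  refine integral_congr_ae ?_
  filter_upwards [h] with y hy
  rw [hx, hy]

theorem HCr_congr_ae {ρ ρ' : Space → ℝ} (h : ρ =ᵐ[volume] ρ') : HCr Q ρ = HCr Q ρ' := by
  rw [HCr, HCr, Epot_congr_ae h]
  exact congrArg (· + _) (integral_congr_ae (h.fun_comp (Phi Q)))

namespace QHyp

variable (hQ : QHyp Q Q') {ρ : Space → ℝ}

def optimalLift (ρ : Space → ℝ) : Phase → ℝ := fun p => hQ.optimalProfile (ρ p.1) p.2

theorem measurable_optimalLift (hρ : Measurable ρ) : Measurable (hQ.optimalLift ρ) :=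
  continuous_profile_uncurry.measurable.comp
    (((hQ.monotone_level.measurable.comp hρ).comp measurable_fst).prodMk measurable_snd)

theorem optimalLift_nonneg (p : Phase) : 0 ≤ hQ.optimalLift ρ p :=
  profile_nonneg hQ.derivInv_zero _ _

theorem rho_optimalLift (hρ0 : ∀ x, 0 ≤ ρ x) : rho (hQ.optimalLift ρ) = ρ :=
  funext fun x => by
    rw [rho, ← hQ.profileMass_level (hρ0 x)]
    rfl

theorem kinQint_optimalLift (x : Space) :
    kinQint Q (fun v => hQ.optimalLift ρ (x, v)) = Phi Q (ρ x) :=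
  (hQ.Phi_eq_kinQint_optimalProfile (ρ x)).symm

theorem optimalLift_fiber (x : Space) :
    (fun v => hQ.optimalLift ρ (x, v)) = hQ.optimalProfile (ρ x) := rfl

theorem integrable_optimalLift (hρ : Measurable ρ) (hρ0 : ∀ x, 0 ≤ ρ x) (hρi : Integrable ρ) :
    Integrable (hQ.optimalLift ρ) := by
  refine (integrable_prod_iff (μ := volume) (ν := volume)
    (hQ.measurable_optimalLift hρ).aestronglyMeasurable).2 ⟨ae_of_all _ fun x => ?_, ?_⟩
  · rw [optimalLift_fiber]
    exact integrable_profile volume hQ.derivInv_zero _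
  · refine hρi.congr (ae_of_all _ fun x => ?_)
    rw [← congrFun (hQ.rho_optimalLift hρ0) x]
    exact integral_congr_ae (ae_of_all _ fun _ =>
      (Real.norm_of_nonneg (hQ.optimalLift_nonneg _)).symm)

theorem integrable_kinetic_optimalLift (hρ : Measurable ρ)
    (hΦ : Integrable fun x => Phi Q (ρ x)) :
    Integrable fun p : Phase => Q (hQ.optimalLift ρ p) + (1/2) * ‖p.2‖^2 * hQ.optimalLift ρ p := by
  have hmeas : Measurable fun p : Phase =>
      Q (hQ.optimalLift ρ p) + (1/2) * ‖p.2‖^2 * hQ.optimalLift ρ p :=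
    (hQ.continuous_Q_profile.measurable.comp
      (((hQ.monotone_level.measurable.comp hρ).comp measurable_fst).prodMk measurable_snd)).add
      ((by fun_prop : Measurable fun p : Phase => (1/2) * ‖p.2‖^2).mul
        (hQ.measurable_optimalLift hρ))
  refine (integrable_prod_iff (μ := volume) (ν := volume) hmeas.aestronglyMeasurable).2
    ⟨ae_of_all _ fun x => ?_, hΦ.congr (ae_of_all _ fun x => ?_)⟩
  · exact (hQ.integrable_kinetic_profile (hQ.level (ρ x))).congr
      (ae_of_all _ fun _ => add_comm _ _)
  · beta_reduce
    rw [← hQ.kinQint_optimalLift x]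
    refine integral_congr_ae (ae_of_all _ fun v => ?_)
    beta_reduce
    rw [Real.norm_of_nonneg (add_nonneg (hQ.nonneg (hQ.optimalLift_nonneg _))
      (mul_nonneg (by positivity) (hQ.optimalLift_nonneg _))), add_comm]

theorem optimalLift_mem_FM {M : ℝ} (hρ : Measurable ρ) (hρ0 : ∀ x, 0 ≤ ρ x)
    (hρi : Integrable ρ) (hΦ : Integrable fun x => Phi Q (ρ x))
    (hLp : MemLp ρ (ENNReal.ofReal (6/5))) (hM : ∫ x, ρ x = M) :
    hQ.optimalLift ρ ∈ FM Q M := by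
  have hfi := hQ.integrable_optimalLift hρ hρ0 hρi
  refine ⟨hQ.optimalLift_nonneg, hfi, hQ.integrable_kinetic_optimalLift hρ hΦ,
    (hQ.rho_optimalLift hρ0).symm ▸ hLp, ?_⟩
  rw [← integral_rho hfi, hQ.rho_optimalLift hρ0, hM]

theorem HC_optimalLift {M : ℝ} (hρ0 : ∀ x, 0 ≤ ρ x) (h : hQ.optimalLift ρ ∈ FM Q M) :
    HC Q (hQ.optimalLift ρ) = HCr Q ρ := by
  rw [HC, Cas_add_Ekin hQ h.1 h.2.1.aestronglyMeasurable h.2.2.1, hQ.rho_optimalLift hρ0, HCr]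
  simp only [kinQint_optimalLift]

end QHyp

end PhaseSpace

theorem HC_eq_HCr_of_minimizer_general (Q Q' : ℝ → ℝ) (hQ : QHyp Q Q') (M : ℝ)
    (f₀ : Phase → ℝ) (hf₀ : f₀ ∈ FM Q M)
    (hmin : ∀ f ∈ FM Q M, HC Q f₀ ≤ HC Q f) :
    HC Q f₀ = HCr Q (rho f₀) := by
  obtain ⟨hf0, hf, hkin, hLp, hM⟩ := hf₀
  obtain ⟨ρ, hρ, hρ0, hρf⟩ := hf.integral_prod_left.aemeasurable.exists_measurable_nonneg
    (ae_of_all _ (rho_nonneg hf0))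
  have hlift : hQ.optimalLift ρ ∈ FM Q M :=
    hQ.optimalLift_mem_FM hρ hρ0 (hf.integral_prod_left.congr hρf)
      ((integrable_Phi_rho hQ hf0 hf hkin).congr (hρf.fun_comp (Phi Q))) (hLp.ae_eq hρf)
      ((integral_congr_ae hρf).symm.trans ((integral_rho hf).trans hM))
  refine le_antisymm ?_ (HCr_rho_le_HC hQ hf0 hf hkin)
  calc HC Q f₀ ≤ HC Q (hQ.optimalLift ρ) := hmin _ hlift
    _ = HCr Q ρ := hQ.HC_optimalLift hρ0 hlift
    _ = HCr Q (rho f₀) := HCr_congr_ae hρf.symm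

/-- If `f₀ ∈ F_M` is a minimizer of `H_C` over `F_M`, then
`H_C(f₀) = H_C^r(ρ_{f₀})`. -/
theorem HC_eq_HCr_of_minimizer (Q Q' : ℝ → ℝ) (hQ : QHyp Q Q') (M : ℝ) (hM : 0 < M)
    (f₀ : Phase → ℝ) (hf₀ : f₀ ∈ FM Q M)
    (hmin : ∀ f ∈ FM Q M, HC Q f₀ ≤ HC Q f) :
    HC Q f₀ = HCr Q (rho f₀) :=
  HC_eq_HCr_of_minimizer_general Q Q' hQ M f₀ hf₀ hmin
end
end

section
/- Let k > 0 and n = k + 3/2. If there are constants C > 0 and f₁ ≥ 0 with Q(f) ≥ C f^{1+1/k} for all f ≥ f₁, then there are constants C' > 0 and ρ₁ ≥ 0 such that Φ(ρ) ≥ C' ρ^{1+1/n} for all ρ ≥ ρ₁. If the bound on Q holds for all f ≥ 0, then the bound on Φ holds for all ρ ≥ 0. -/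
open MeasureTheory Real Filter Topology

noncomputable section

/-!
Let `g ∈ G_ρ` have energy `E = ∫ (|v|² g / 2 + Q(g))` and fix `R, s > 0`. Pointwise, `g ≤ s`
on `{|v| < R, g ≤ s}`, `g ≤ |v|² g / R²` where `|v| ≥ R`, and `g ≤ Q(g) / (C s^{1/k})` where
`g > s`, so `ρ ≲ s R³ + (1/R² + 1/(C s^{1/k})) E`. Choosing `R² ~ E/ρ` and `s ~ (E/ρ)^k` gives
`E ≳ ρ^{1+1/n}` with `n = k + 3/2`. If the bound on `Q` only holds for `f ≥ f₁`, it holds for all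
`f ≥ 0` after replacing `Q(f)` by `Q(f) + C f₁^{1/k} f` (this uses `Q ≥ 0`, a consequence of
convexity and `Q(0) = Q'(0) = 0`); the extra term `C f₁^{1/k} ρ` is absorbed for large `ρ`.
-/

open Module Metric

lemma QHyp.nonneg_s8 {Q Q' : ℝ → ℝ} (hQ : QHyp Q Q') {t : ℝ} (ht : 0 ≤ t) : 0 ≤ Q t := by
  rcases ht.eq_or_lt with rfl | ht
  · exact hQ.zero.ge
  have hslope := hQ.strictConvex.convexOn.le_slope_of_hasDerivWithinAt Set.self_mem_Ici
    (Set.mem_Ici.2 ht.le) ht (hQ.hasDeriv 0 Set.self_mem_Ici)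
  rw [hQ.derivZero, slope_def_field, hQ.zero, sub_zero, sub_zero] at hslope
  exact (div_nonneg_iff.1 hslope).elim (·.1) fun h => absurd h.2 ht.not_ge

lemma mul_rpow_le_add_mul_of_le {Q : ℝ → ℝ} {C k f₁ : ℝ} (hC : 0 ≤ C) (hk : 0 ≤ k)
    (hf₁ : 0 ≤ f₁) (hQ0 : ∀ f, 0 ≤ f → 0 ≤ Q f) (hQ : ∀ f, f₁ ≤ f → C * f ^ (1 + 1 / k) ≤ Q f)
    {f : ℝ} (hf : 0 ≤ f) : C * f ^ (1 + 1 / k) ≤ Q f + C * f₁ ^ (1 / k) * f := by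
  rcases le_total f₁ f with h | h
  · have : 0 ≤ C * f₁ ^ (1 / k) * f := by positivity
    linarith [hQ f h]
  · have : C * f ^ (1 + 1 / k) ≤ C * f₁ ^ (1 / k) * f := by
      rw [Real.rpow_add' hf (by positivity), Real.rpow_one, mul_comm f, ← mul_assoc]
      gcongr
    linarith [hQ0 f hf]

section Splitting

variable {C k : ℝ} {P : ℝ → ℝ}

lemma le_mul_kinetic_of_le_norm {R x : ℝ} {V : Type*} [SeminormedAddCommGroup V] {v : V}
    (hR : 0 < R) (hx : 0 ≤ x) (hv : R ≤ ‖v‖) : x ≤ 2 / R ^ 2 * (1 / 2 * ‖v‖ ^ 2 * x) := by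
  have hRv : R ^ 2 ≤ ‖v‖ ^ 2 := pow_le_pow_left₀ hR.le hv 2
  calc x ≤ ‖v‖ ^ 2 / R ^ 2 * x := le_mul_of_one_le_left hx ((one_le_div (by positivity)).2 hRv)
    _ = 2 / R ^ 2 * (1 / 2 * ‖v‖ ^ 2 * x) := by ring

lemma le_one_div_mul_of_mul_rpow_le (hC : 0 < C) (hk : 0 ≤ k)
    (hP : ∀ x, 0 ≤ x → C * x ^ (1 + 1 / k) ≤ P x) {s x : ℝ} (hs : 0 < s) (hsx : s ≤ x) :
    x ≤ 1 / (C * s ^ (1 / k)) * P x := by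
  have hx : 0 < x := hs.trans_le hsx
  rw [one_div_mul_eq_div, le_div_iff₀ (by positivity)]
  calc x * (C * s ^ (1 / k)) ≤ C * (x * x ^ (1 / k)) := by
        rw [mul_left_comm]; gcongr
    _ = C * x ^ (1 + 1 / k) := by rw [Real.rpow_add hx, Real.rpow_one]
    _ ≤ P x := hP x hx.le

lemma le_indicator_ball_add_mul (hC : 0 < C) (hk : 0 ≤ k)
    (hP : ∀ x, 0 ≤ x → C * x ^ (1 + 1 / k) ≤ P x) {R s x : ℝ} (hR : 0 < R) (hs : 0 < s)
    (hx : 0 ≤ x) {V : Type*} [SeminormedAddCommGroup V] (v : V) :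
    x ≤ (ball 0 R).indicator (fun _ => s) v
      + (2 / R ^ 2 + 1 / (C * s ^ (1 / k))) * (1 / 2 * ‖v‖ ^ 2 * x + P x) := by
  set e := 1 / 2 * ‖v‖ ^ 2 * x + P x
  have hkin : 0 ≤ 1 / 2 * ‖v‖ ^ 2 * x := by positivity
  have hPx : 0 ≤ P x := (by positivity : 0 ≤ C * x ^ (1 + 1 / k)).trans (hP x hx)
  have hind : 0 ≤ (ball 0 R).indicator (fun _ => s) v := Set.indicator_nonneg (fun _ _ => hs.le) v
  have hkin_le : 2 / R ^ 2 * (1 / 2 * ‖v‖ ^ 2 * x) ≤ 2 / R ^ 2 * e := by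
    gcongr; exact le_add_of_nonneg_right hPx
  have hP_le : 1 / (C * s ^ (1 / k)) * P x ≤ 1 / (C * s ^ (1 / k)) * e := by
    gcongr; exact le_add_of_nonneg_left hkin
  have hkin_e : 0 ≤ 2 / R ^ 2 * e := by positivity
  have hP_e : 0 ≤ 1 / (C * s ^ (1 / k)) * e := by positivity
  rw [add_mul]
  by_cases hv : v ∈ ball 0 R
  · rw [Set.indicator_of_mem hv]
    rcases le_total x s with hxs | hsx
    · linarith
    · linarith [le_one_div_mul_of_mul_rpow_le hC hk hP hs hsx]
  · have hRv : R ≤ ‖v‖ := by simpa using hv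
    linarith [le_mul_kinetic_of_le_norm hR hx hRv]

variable {V : Type*} [NormedAddCommGroup V] [MeasurableSpace V] [BorelSpace V] [ProperSpace V]
  {μ : Measure V} [IsFiniteMeasureOnCompacts μ] {g : V → ℝ}

lemma integral_le_measureReal_ball_add (hC : 0 < C) (hk : 0 ≤ k)
    (hP : ∀ x, 0 ≤ x → C * x ^ (1 + 1 / k) ≤ P x) (hg0 : ∀ v, 0 ≤ g v) (hg : Integrable g μ)
    (he : Integrable (fun v => 1 / 2 * ‖v‖ ^ 2 * g v + P (g v)) μ) {R s : ℝ} (hR : 0 < R)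
    (hs : 0 < s) :
    ∫ v, g v ∂μ ≤ s * μ.real (ball 0 R)
      + (2 / R ^ 2 + 1 / (C * s ^ (1 / k))) * ∫ v, (1 / 2 * ‖v‖ ^ 2 * g v + P (g v)) ∂μ := by
  have hind : Integrable ((ball (0 : V) R).indicator fun _ => s) μ :=
    (integrableOn_const measure_ball_lt_top.ne).integrable_indicator measurableSet_ball
  calc ∫ v, g v ∂μ
      ≤ ∫ v, ((ball 0 R).indicator (fun _ => s) v
          + (2 / R ^ 2 + 1 / (C * s ^ (1 / k))) * (1 / 2 * ‖v‖ ^ 2 * g v + P (g v))) ∂μ :=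
        integral_mono hg (hind.add (he.const_mul _))
          fun v => le_indicator_ball_add_mul hC hk hP hR hs (hg0 v) v
    _ = _ := by
        rw [integral_add hind (he.const_mul _), integral_indicator_const _ measurableSet_ball,
          integral_const_mul, smul_eq_mul, mul_comm (μ.real _)]

end Splitting

lemma inv_rpow_mul_rpow_le_of_forall_le {C k ω E r : ℝ} {d : ℕ} (hω : 0 < ω) (hC : 0 < C)
    (hk : 0 < k) (hr : 0 < r)
    (h : ∀ R s : ℝ, 0 < R → 0 < s →
      r ≤ s * (R ^ d * ω) + (2 / R ^ 2 + 1 / (C * s ^ (1 / k))) * E) :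
    (3 * (ω * (3 / C) ^ k * 6 ^ ((d : ℝ) / 2)))⁻¹ ^ (1 / (k + d / 2)) * r ^ (1 + 1 / (k + d / 2))
      ≤ E := by
  set n : ℝ := k + d / 2 with hn
  set A : ℝ := ω * (3 / C) ^ k * 6 ^ ((d : ℝ) / 2)
  have hnpos : 0 < n := by positivity
  have hA : 0 < A := by positivity
  set u : ℝ := (r / (3 * A)) ^ (1 / n)
  have hu : 0 < u := by positivity
  have hAu : A * u ^ n = r / 3 := by
    simp only [u]
    rw [one_div, Real.rpow_inv_rpow (by positivity) hnpos.ne']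
    field_simp
  have hR : √(6 * u) ^ 2 = 6 * u := Real.sq_sqrt (by positivity)
  have hs : ((3 * u / C) ^ k) ^ (1 / k) = 3 * u / C := by
    rw [one_div, Real.rpow_rpow_inv (by positivity) hk.ne']
  have hvol : (3 * u / C) ^ k * (√(6 * u) ^ d * ω) = A * u ^ n := by
    rw [Real.sqrt_eq_rpow, ← Real.rpow_natCast, ← Real.rpow_mul (by positivity),
      show 1 / 2 * (d : ℝ) = d / 2 by ring, show 3 * u / C = 3 / C * u by ring,
      Real.mul_rpow (by positivity) hu.le, Real.mul_rpow (by norm_num) hu.le, hn,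
      Real.rpow_add hu]
    ring
  have key := h (√(6 * u)) ((3 * u / C) ^ k) (by positivity) (by positivity)
  rw [hR, hs, hvol, hAu,
    show 2 / (6 * u) + 1 / (C * (3 * u / C)) = 2 / (3 * u) by field_simp; ring] at key
  have hur : u * r ≤ E := by
    have h3u : 2 / (3 * u) * E * u = 2 / 3 * E := by field_simp
    nlinarith [mul_le_mul_of_nonneg_right key hu.le]
  calc _ = (r / (3 * A)) ^ (1 / n) * r := by
        rw [Real.div_rpow hr.le (by positivity), Real.inv_rpow (by positivity),
          Real.rpow_add hr, Real.rpow_one]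
        ring
    _ ≤ E := hur

theorem exists_pos_mul_rpow_le_integral_kinetic_add {V : Type*} [NormedAddCommGroup V]
    [NormedSpace ℝ V] [FiniteDimensional ℝ V] [MeasurableSpace V] [BorelSpace V] (μ : Measure V)
    [μ.IsAddHaarMeasure] {C k : ℝ} (hC : 0 < C) (hk : 0 < k) :
    ∃ B > 0, ∀ (P : ℝ → ℝ), (∀ x, 0 ≤ x → C * x ^ (1 + 1 / k) ≤ P x) →
      ∀ g : V → ℝ, (∀ v, 0 ≤ g v) → Integrable g μ →
      Integrable (fun v => 1 / 2 * ‖v‖ ^ 2 * g v + P (g v)) μ →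
      B * (∫ v, g v ∂μ) ^ (1 + 1 / (k + finrank ℝ V / 2))
        ≤ ∫ v, (1 / 2 * ‖v‖ ^ 2 * g v + P (g v)) ∂μ := by
  set ω := μ.real (ball 0 1)
  have hω : 0 < ω := ENNReal.toReal_pos (measure_ball_pos μ 0 one_pos).ne' measure_ball_lt_top.ne
  have hball : ∀ R : ℝ, 0 < R → μ.real (ball 0 R) = R ^ finrank ℝ V * ω := fun R hR => by
    rw [measureReal_def, Measure.addHaar_ball_of_pos μ 0 hR, ENNReal.toReal_mul,
      ENNReal.toReal_ofReal (by positivity)]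
    rfl
  refine ⟨(3 * (ω * (3 / C) ^ k * 6 ^ ((finrank ℝ V : ℝ) / 2)))⁻¹ ^ (1 / (k + finrank ℝ V / 2)),
    by positivity, fun P hP g hg0 hg he => ?_⟩
  rcases (integral_nonneg (μ := μ) (f := g) hg0).eq_or_lt with hr | hr
  · rw [← hr, Real.zero_rpow (by positivity), mul_zero]
    exact integral_nonneg fun v =>
      add_nonneg (by have := hg0 v; positivity)
        ((mul_nonneg hC.le (Real.rpow_nonneg (hg0 v) _)).trans (hP _ (hg0 v)))
  refine inv_rpow_mul_rpow_le_of_forall_le hω hC hk hr fun R s hR hs => ?_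
  rw [← hball R hR]
  exact integral_le_measureReal_ball_add hC hk.le hP hg0 hg he hR hs

lemma Gset_nonempty {Q : ℝ → ℝ} (hQ0 : Q 0 = 0) {r : ℝ} (hr : 0 ≤ r) : (Gset Q r).Nonempty := by
  set a := r / volume.real (ball (0 : Space) 1)
  have ha : 0 ≤ a := by positivity
  refine ⟨(ball 0 1).indicator fun _ => a, Set.indicator_nonneg (fun _ _ => ha),
    (integrableOn_const measure_ball_lt_top.ne).integrable_indicator measurableSet_ball, ?_, ?_⟩
  · have : (fun v : Space => 1 / 2 * ‖v‖ ^ 2 * (ball 0 1).indicator (fun _ => a) v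
        + Q ((ball 0 1).indicator (fun _ => a) v))
        = (ball 0 1).indicator fun v => 1 / 2 * ‖v‖ ^ 2 * a + Q a := by
      funext v
      by_cases hv : v ∈ ball (0 : Space) 1 <;> simp [hv, hQ0]
    rw [this]
    have hcont : Continuous fun v : Space => 1 / 2 * ‖v‖ ^ 2 * a + Q a := by fun_prop
    exact ((hcont.continuousOn.integrableOn_compact (isCompact_closedBall 0 1)).mono_set
      ball_subset_closedBall).integrable_indicator measurableSet_ball
  · have : 0 < volume.real (ball (0 : Space) 1) :=
      ENNReal.toReal_pos (measure_ball_pos _ _ one_pos).ne' measure_ball_lt_top.ne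
    rw [integral_indicator_const _ measurableSet_ball, smul_eq_mul]
    exact mul_div_cancel₀ r this.ne'

lemma le_Phi_of_forall_le_kinQint {Q : ℝ → ℝ} (hQ0 : Q 0 = 0) {r b : ℝ} (hr : 0 ≤ r)
    (hb : ∀ g ∈ Gset Q r, b ≤ kinQint Q g) : b ≤ Phi Q r :=
  le_csInf ((Gset_nonempty hQ0 hr).image _) (Set.forall_mem_image.2 hb)

lemma exists_pos_mul_rpow_le_kinQint_add {C k : ℝ} (hC : 0 < C) (hk : 0 < k) :
    ∃ B > 0, ∀ (Q : ℝ → ℝ) (D r : ℝ) (g : Space → ℝ),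
      (∀ f, 0 ≤ f → C * f ^ (1 + 1 / k) ≤ Q f + D * f) → g ∈ Gset Q r →
      B * r ^ (1 + 1 / (k + 3 / 2)) ≤ kinQint Q g + D * r := by
  obtain ⟨B, hB, h⟩ := exists_pos_mul_rpow_le_integral_kinetic_add (volume : Measure Space) hC hk
  refine ⟨B, hB, fun Q D r g hQD ⟨hg0, hg, he, hr⟩ => ?_⟩
  have hassoc : (fun v : Space => 1 / 2 * ‖v‖ ^ 2 * g v + (Q (g v) + D * g v))
      = fun v => (1 / 2 * ‖v‖ ^ 2 * g v + Q (g v)) + D * g v := by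
    funext v; ring
  have := h (fun x => Q x + D * x) hQD g hg0 hg (hassoc ▸ he.add (hg.const_mul D))
  rwa [hassoc, integral_add he (hg.const_mul D), integral_const_mul, hr,
    finrank_euclideanSpace_fin, Nat.cast_ofNat] at this

lemma half_mul_rpow_le_of_le_add {B D n ρ E : ℝ} (hB : 0 < B) (hD : 0 ≤ D) (hn : 0 < n)
    (hρ : (2 * D / B) ^ n ≤ ρ) (h : B * ρ ^ (1 + 1 / n) ≤ E + D * ρ) :
    B / 2 * ρ ^ (1 + 1 / n) ≤ E := by
  have hρ0 : 0 ≤ ρ := (by positivity : 0 ≤ (2 * D / B) ^ n).trans hρ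
  have hDρ : 2 * D / B ≤ ρ ^ (1 / n) := by
    calc 2 * D / B = ((2 * D / B) ^ n) ^ (1 / n) := by
          rw [one_div, Real.rpow_rpow_inv (by positivity) hn.ne']
      _ ≤ ρ ^ (1 / n) := by gcongr
  have : D * ρ ≤ B / 2 * ρ ^ (1 + 1 / n) := by
    rw [Real.rpow_add' hρ0 (by positivity), Real.rpow_one]
    rw [div_le_iff₀ hB] at hDρ
    nlinarith
  linarith

/-- If `Q(f) ≥ C f^{1+1/k}` for all large `f` (with `k > 0`, `C > 0`),
then `Φ(ρ) ≥ C' ρ^{1+1/n}` for all large `ρ`, where `n = k + 3/2`; if the bound on `Q`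
holds for all `f ≥ 0`, then the bound on `Φ` holds for all `ρ ≥ 0`. -/
theorem Phi_lower_bound (Q Q' : ℝ → ℝ) (hQ : QHyp Q Q')
    (k n : ℝ) (hk : 0 < k) (hn : n = k + 3/2)
    (C f₁ : ℝ) (hC : 0 < C) (hf₁ : 0 ≤ f₁)
    (hQge : ∀ f : ℝ, f₁ ≤ f → C * f ^ (1 + 1/k) ≤ Q f) :
    (∃ C' > (0:ℝ), ∃ ρ₁ ≥ (0:ℝ), ∀ ρ : ℝ, ρ₁ ≤ ρ → C' * ρ ^ (1 + 1/n) ≤ Phi Q ρ) ∧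
    ((∀ f : ℝ, 0 ≤ f → C * f ^ (1 + 1/k) ≤ Q f) →
      ∃ C' > (0:ℝ), ∀ ρ : ℝ, 0 ≤ ρ → C' * ρ ^ (1 + 1/n) ≤ Phi Q ρ) := by
  obtain ⟨B, hB, hbound⟩ := exists_pos_mul_rpow_le_kinQint_add hC hk
  rw [← hn] at hbound
  have hnpos : 0 < n := by rw [hn]; positivity
  constructor
  · set D := C * f₁ ^ (1 / k)
    have hQD : ∀ f, 0 ≤ f → C * f ^ (1 + 1 / k) ≤ Q f + D * f := fun f hf =>
      mul_rpow_le_add_mul_of_le hC.le hk.le hf₁ (fun _ => hQ.nonneg_s8) hQge hf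
    refine ⟨B / 2, by positivity, (2 * D / B) ^ n, by positivity, fun ρ hρ => ?_⟩
    have hρ0 : 0 ≤ ρ := (by positivity : (0 : ℝ) ≤ (2 * D / B) ^ n).trans hρ
    refine le_Phi_of_forall_le_kinQint hQ.zero hρ0 fun g hg => ?_
    exact half_mul_rpow_le_of_le_add hB (by positivity) hnpos hρ (hbound Q D ρ g hQD hg)
  · intro hQge₀
    refine ⟨B, hB, fun ρ hρ => le_Phi_of_forall_le_kinQint hQ.zero hρ fun g hg => ?_⟩
    simpa using hbound Q 0 ρ g (by simpa using hQge₀) hg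
end
end
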